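/- Recurrence via Cauchy numbers, second kind: for n ≥ 1, D̂_n(x|a_1,…,a_r) = (x + a_1+⋯+a_r)·D̂_{n-1}(x−1|a_1,…,a_r) + (r/n)∑_{l=0}^n C(n,l) c_l D̂_{n-l}(x−1|a_1,…,a_r) − (1/n)∑_{j=1}^r ∑_{l=0}^n C(n,l) a_j c_l D̂_{n-l}(x−1|a_1,…,a_r,a_j). -/

import Mathlib

open Finset PowerSeries

/-- Exponential generating function: `∑ f n * t^n / n!`. -/
noncomputable def egf (f : ℕ → ℚ) : PowerSeries ℚ :=
  PowerSeries.mk fun n => f n / n.factorial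

/-- The formal power series `log(1+t) = ∑_{m≥1} (-1)^{m-1} t^m / m`. -/
noncomputable def log1p : PowerSeries ℚ :=
  PowerSeries.mk fun n => if n = 0 then 0 else (-1) ^ (n - 1) / n

/-- Formal exponential composition: for `f` with zero constant term this is
`exp(f) = ∑_k f^k / k!` (the sum in each coefficient is finite). -/
noncomputable def expPS (f : PowerSeries ℚ) : PowerSeries ℚ :=
  PowerSeries.mk fun n =>
    ∑ k ∈ Finset.range (n + 1), (PowerSeries.coeff n (f ^ k)) / k.factorial

/-- `(1+t)^a := exp(a · log(1+t))` as a formal power series. -/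
noncomputable def onePow (a : ℚ) : PowerSeries ℚ := expPS (PowerSeries.C a * log1p)

/-- `e^{a t} = ∑ a^n t^n / n!`. -/
noncomputable def expAt (a : ℚ) : PowerSeries ℚ :=
  PowerSeries.mk fun n => a ^ n / n.factorial

/-- Falling factorial `(x)_n = x(x-1)⋯(x-n+1)`. -/
noncomputable def ffall (x : ℚ) (n : ℕ) : ℚ := ∏ i ∈ Finset.range n, (x - i)

/-!
Write `L = log(1+t)`, `W_a = (1+t)^a` and `θ = (1+t) d/dt`, so that `θ L = 1` and
`θ W_a = a W_a`. Let `F x` be the generating function of `D̂_n(x|a)` and `F_j x` the one with the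
extra parameter `a_j`; they are pinned down by `∏ (W_{a_i} - 1) · F x = ∏ W_{a_i} · L^r · W_x`.
Applying `θ` to this identity, multiplying by `L`, and using `F x = (1+t) F (x-1)` and
`(W_{a_j} - 1) F_j x = W_{a_j} L F x` (which absorbs `θ (W_{a_j} - 1) = a_j W_{a_j}`) gives
`L F'(x) = (x + ∑ a_j) L F(x-1) + r F(x-1) - ∑ a_j F_j(x-1)`.
Multiplying by `t / L = ∑ c_n t^n / n!` and comparing coefficients of `t^n / n!` gives the
recurrence.
-/

theorem log1p_eq_log : log1p = log ℚ := by
  ext (_ | n) <;> simp [log1p, pow_succ]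

theorem one_add_X_mul_derivative_log1p : (1 + X) * d⁄dX ℚ log1p = 1 := by
  rw [log1p_eq_log, deriv_log]
  ext (_ | n)
  · simp
  · simp [add_mul, coeff_succ_X_mul, pow_succ, coeff_one]

theorem PowerSeries.coeff_pow_eq_zero_of_lt {R : Type*} [CommSemiring R] {f : R⟦X⟧}
    (hf : constantCoeff f = 0) {m k : ℕ} (h : m < k) : coeff m (f ^ k) = 0 :=
  X_pow_dvd_iff.mp (pow_dvd_pow_of_dvd (X_dvd_iff.mpr hf) k) m h

theorem expPS_eq_subst {f : ℚ⟦X⟧} (hf : constantCoeff f = 0) : expPS f = (exp ℚ).subst f := by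
  ext n
  rw [expPS, coeff_mk, coeff_subst' (HasSubst.of_constantCoeff_zero' hf),
    finsum_eq_sum_of_support_subset (s := range (n + 1))]
  · simp [div_eq_inv_mul]
  · intro k hk
    by_contra hkn
    exact hk (by simp [coeff_pow_eq_zero_of_lt hf (by simpa using hkn : n < k)])

theorem derivative_expPS {f : ℚ⟦X⟧} (hf : constantCoeff f = 0) :
    d⁄dX ℚ (expPS f) = expPS f * d⁄dX ℚ f := by
  rw [expPS_eq_subst hf, derivative_subst (HasSubst.of_constantCoeff_zero' hf), derivative_exp]

theorem PowerSeries.eq_of_derivative_eq_mul {R : Type*} [CommRing R] [IsAddTorsionFree R]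
    {u y z : R⟦X⟧} (hy : d⁄dX R y = u * y) (hz : d⁄dX R z = u * z)
    (h0 : constantCoeff y = constantCoeff z) : y = z := by
  ext n
  induction n using Nat.strong_induction_on with
  | _ n ih =>
    rcases n with _ | m
    · simpa using h0
    · have h : coeff m (d⁄dX R y) = coeff m (d⁄dX R z) := by
        rw [hy, hz, coeff_mul, coeff_mul]
        refine sum_congr rfl fun p hp => ?_
        rw [ih p.2 (by have := mem_antidiagonal.mp hp; omega)]
      rw [coeff_derivative, coeff_derivative, ← Nat.cast_succ, mul_comm, ← nsmul_eq_mul,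
        mul_comm, ← nsmul_eq_mul] at h
      exact (smul_right_inj (Nat.succ_ne_zero m)).mp h

theorem Derivation.leibniz_prod {R A M : Type*} [CommSemiring R] [CommSemiring A]
    [AddCommMonoid M] [Algebra R A] [Module A M] [Module R M] (D : Derivation R A M)
    {ι : Type*} [DecidableEq ι] (s : Finset ι) (f : ι → A) :
    D (∏ i ∈ s, f i) = ∑ i ∈ s, (∏ j ∈ s.erase i, f j) • D (f i) := by
  induction s using Finset.induction with
  | empty => simp
  | insert b s hb ih =>
    rw [prod_insert hb, leibniz, ih, sum_insert hb, erase_insert hb, smul_sum, add_comm]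
    congr 1
    refine sum_congr rfl fun i hi => ?_
    rw [erase_insert_of_ne (ne_of_mem_of_not_mem hi hb).symm,
      prod_insert fun h => hb (mem_of_mem_erase h), smul_smul]

/-- `(1 + t) d/dt`, the Euler operator `s d/ds` in the variable `s = 1 + t`. -/
noncomputable def eulerOp : Derivation ℚ ℚ⟦X⟧ ℚ⟦X⟧ := (1 + X : ℚ⟦X⟧) • d⁄dX ℚ

theorem eulerOp_apply (f : ℚ⟦X⟧) : eulerOp f = (1 + X) * d⁄dX ℚ f := rfl

theorem eulerOp_log1p : eulerOp log1p = 1 := one_add_X_mul_derivative_log1p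

theorem eulerOp_one_add_X : eulerOp (1 + X) = 1 + X := by
  simp [eulerOp_apply]

theorem eulerOp_onePow (a : ℚ) : eulerOp (onePow a) = C a * onePow a := by
  have h : constantCoeff (C a * log1p) = 0 := by simp [log1p_eq_log]
  rw [eulerOp_apply, onePow, derivative_expPS h, Derivation.leibniz, smul_eq_mul, derivative_C,
    smul_zero, add_zero]
  linear_combination C a * expPS (C a * log1p) * one_add_X_mul_derivative_log1p

theorem eq_of_eulerOp_eq_mul {u y z : ℚ⟦X⟧} (hy : eulerOp y = u * y) (hz : eulerOp z = u * z)
    (h0 : constantCoeff y = constantCoeff z) : y = z := by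
  have hd : ∀ f, d⁄dX ℚ f = d⁄dX ℚ log1p * eulerOp f := fun f => by
    rw [eulerOp_apply, ← mul_assoc, mul_comm _ (1 + X), one_add_X_mul_derivative_log1p, one_mul]
  refine eq_of_derivative_eq_mul (u := d⁄dX ℚ log1p * u) ?_ ?_ h0
  · rw [hd, hy, mul_assoc]
  · rw [hd, hz, mul_assoc]

theorem constantCoeff_onePow (a : ℚ) : constantCoeff (onePow a) = 1 := by
  rw [← coeff_zero_eq_constantCoeff_apply]
  simp [onePow, expPS]

theorem coeff_one_onePow (a : ℚ) : coeff 1 (onePow a) = a := by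
  simp [onePow, expPS, sum_range_succ, log1p_eq_log]

theorem onePow_sub_one_ne_zero {a : ℚ} (ha : a ≠ 0) : onePow a - 1 ≠ 0 := fun h =>
  ha (by simpa [coeff_one_onePow] using congrArg (coeff 1) h)

theorem onePow_eq_one_add_X_mul (x : ℚ) : onePow x = (1 + X) * onePow (x - 1) := by
  refine eq_of_eulerOp_eq_mul (u := C x) (eulerOp_onePow x) ?_ (by simp [constantCoeff_onePow])
  rw [Derivation.leibniz, smul_eq_mul, smul_eq_mul, eulerOp_onePow, eulerOp_one_add_X, map_sub,
    map_one]
  ring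

theorem log1p_mul_eulerOp_log1p_pow (r : ℕ) : log1p * eulerOp (log1p ^ r) = r * log1p ^ r := by
  rcases r with _ | r
  · simp
  · rw [Derivation.leibniz_pow, eulerOp_log1p, Nat.add_sub_cancel, smul_eq_mul, nsmul_eq_mul]
    ring

section Barnes

variable {ι : Type*} [Fintype ι] (a : ι → ℚ)

theorem eulerOp_prod_onePow : eulerOp (∏ i, onePow (a i)) = C (∑ i, a i) * ∏ i, onePow (a i) := by
  classical
  rw [Derivation.leibniz_prod, map_sum, sum_mul]
  refine sum_congr rfl fun i _ => ?_
  rw [eulerOp_onePow, smul_eq_mul, ← mul_prod_erase _ _ (mem_univ i)]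
  ring

variable {a}

theorem log1p_mul_mul_eulerOp_prod_onePow_sub_one {H : ℚ⟦X⟧} {E : ι → ℚ⟦X⟧}
    (hE : ∀ j, (onePow (a j) - 1) * E j = onePow (a j) * log1p * H) :
    log1p * H * eulerOp (∏ i, (onePow (a i) - 1)) =
      (∏ i, (onePow (a i) - 1)) * ∑ j, C (a j) * E j := by
  classical
  rw [Derivation.leibniz_prod, mul_sum, mul_sum]
  refine sum_congr rfl fun j _ => ?_
  rw [← mul_prod_erase _ _ (mem_univ j), smul_eq_mul, map_sub, Derivation.map_one_eq_zero,
    sub_zero, eulerOp_onePow]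
  linear_combination (C (a j) * ∏ i ∈ univ.erase j, (onePow (a i) - 1)) * (hE j).symm

variable {F : ℚ → ℚ⟦X⟧} (hP : ∏ i, (onePow (a i) - 1) ≠ 0)
  (hF : ∀ x, (∏ i, (onePow (a i) - 1)) * F x =
    (∏ i, onePow (a i)) * log1p ^ Fintype.card ι * onePow x)
include hP hF

theorem barnes_eq_one_add_X_mul (x : ℚ) : F x = (1 + X) * F (x - 1) := by
  refine mul_left_cancel₀ hP ?_
  rw [hF, mul_left_comm, hF, onePow_eq_one_add_X_mul]
  ring

theorem onePow_sub_one_mul_barnes_succ {G : ℚ → ℚ⟦X⟧} (j : ι)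
    (hG : ∀ x, ((onePow (a j) - 1) * ∏ i, (onePow (a i) - 1)) * G x =
      (onePow (a j) * ∏ i, onePow (a i)) * log1p ^ (Fintype.card ι + 1) * onePow x)
    (x : ℚ) : (onePow (a j) - 1) * G x = onePow (a j) * log1p * F x := by
  refine mul_left_cancel₀ hP ?_
  linear_combination hG x - onePow (a j) * log1p * hF x

theorem log1p_mul_derivative_barnes {E : ι → ℚ → ℚ⟦X⟧}
    (hE : ∀ j x, ((onePow (a j) - 1) * ∏ i, (onePow (a i) - 1)) * E j x =
      (onePow (a j) * ∏ i, onePow (a i)) * log1p ^ (Fintype.card ι + 1) * onePow x)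
    (x : ℚ) :
    log1p * d⁄dX ℚ (F x) = C (x + ∑ i, a i) * (log1p * F (x - 1))
      + C (Fintype.card ι : ℚ) * F (x - 1) - ∑ j, C (a j) * E j (x - 1) := by
  have hshift := barnes_eq_one_add_X_mul hP hF x
  have hT := log1p_mul_mul_eulerOp_prod_onePow_sub_one fun j =>
    onePow_sub_one_mul_barnes_succ hP hF j (hE j) (x - 1)
  have hθ := congrArg eulerOp (hF x)
  simp only [Derivation.leibniz, smul_eq_mul, eulerOp_prod_onePow, eulerOp_onePow,
    eulerOp_apply (F x)] at hθ
  have hpow := log1p_mul_eulerOp_log1p_pow (Fintype.card ι)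
  have h1X : (1 + X : ℚ⟦X⟧) ≠ 0 := fun h => by simpa using congrArg constantCoeff h
  refine mul_left_cancel₀ (mul_ne_zero h1X hP) ?_
  set P := ∏ i, (onePow (a i) - 1)
  set Q := ∏ i, onePow (a i)
  set r := Fintype.card ι
  rw [map_add, map_natCast]
  linear_combination log1p * hθ + onePow x * Q * hpow - ((C x + C (∑ i, a i)) * log1p + r) * hF x
    + (((C x + C (∑ i, a i)) * log1p + r) * P - log1p * eulerOp P) * hshift - (1 + X) * hT

end Barnes

theorem coeff_egf (f : ℕ → ℚ) (n : ℕ) : coeff n (egf f) = f n / n.factorial := coeff_mk _ _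

theorem egf_mul (f g : ℕ → ℚ) :
    egf f * egf g = egf fun n => ∑ l ∈ range (n + 1), n.choose l * f l * g (n - l) := by
  ext n
  rw [coeff_mul, Nat.sum_antidiagonal_eq_sum_range_succ_mk, coeff_egf, sum_div]
  refine sum_congr rfl fun l hl => ?_
  have hl : l ≤ n := Nat.lt_succ_iff.mp (mem_range.mp hl)
  rw [coeff_egf, coeff_egf, Nat.cast_choose ℚ hl]
  field_simp

theorem X_mul_egf (f : ℕ → ℚ) : X * egf f = egf fun n => n * f (n - 1) := by
  ext (_ | n)
  · simp [coeff_egf]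
  · rw [coeff_succ_X_mul, coeff_egf, coeff_egf, Nat.factorial_succ]
    push_cast
    field_simp

theorem X_mul_derivative_egf (f : ℕ → ℚ) : X * d⁄dX ℚ (egf f) = egf fun n => n * f n := by
  ext (_ | n)
  · simp [coeff_egf]
  · rw [coeff_succ_X_mul, coeff_derivative, coeff_egf, coeff_egf, Nat.factorial_succ]
    push_cast
    field_simp

theorem eq_of_X_mul_derivative_egf {ι : Type*} [Fintype ι] {f g c : ℕ → ℚ} {e : ι → ℕ → ℚ}
    {s r : ℚ} {b : ι → ℚ}
    (h : X * d⁄dX ℚ (egf f) = C s * (X * egf g) + C r * (egf c * egf g)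
      - egf c * ∑ j, C (b j) * egf (e j))
    {n : ℕ} (hn : n ≠ 0) :
    f n = s * g (n - 1) + r / n * ∑ l ∈ range (n + 1), n.choose l * c l * g (n - l)
      - 1 / n * ∑ j, ∑ l ∈ range (n + 1), n.choose l * b j * c l * e j (n - l) := by
  simp only [X_mul_derivative_egf, X_mul_egf, mul_sum, mul_left_comm (egf c), egf_mul] at h
  have hcoeff := congrArg (coeff n) h
  simp only [map_sub, map_add, map_sum, coeff_C_mul, coeff_egf, mul_div_assoc', ← sum_div]
    at hcoeff
  have hn' : (n : ℚ) ≠ 0 := Nat.cast_ne_zero.mpr hn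
  have hb : ∑ j, ∑ l ∈ range (n + 1), (n.choose l : ℚ) * b j * c l * e j (n - l) =
      ∑ j, b j * ∑ l ∈ range (n + 1), n.choose l * c l * e j (n - l) := by
    simp only [mul_sum]
    exact sum_congr rfl fun _ _ => sum_congr rfl fun _ _ => by ring
  rw [hb]
  field_simp at hcoeff ⊢
  linear_combination hcoeff

theorem stmt13 (r : ℕ) (a : Fin r → ℚ) (ha : ∀ j, a j ≠ 0) (Dh : ℕ → ℚ → ℚ)
    (hDh : ∀ x : ℚ, (∏ j, (onePow (a j) - 1)) * egf (fun n => Dh n x) = (∏ j, onePow (a j)) * log1p ^ r * onePow x)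
    (E : Fin r → ℕ → ℚ → ℚ)
    (hE : ∀ (j : Fin r) (x : ℚ),
      ((onePow (a j) - 1) * ∏ i, (onePow (a i) - 1)) * egf (fun n => E j n x) =
        (onePow (a j) * ∏ i, onePow (a i)) * log1p ^ (r + 1) * onePow x)
    (c : ℕ → ℚ) (hc : log1p * egf c = PowerSeries.X)
    (n : ℕ) (hn : 1 ≤ n) (x : ℚ) :
    Dh n x = (x + ∑ j, a j) * Dh (n - 1) (x - 1)
      + (r : ℚ) / n * ∑ l ∈ Finset.range (n + 1), (n.choose l : ℚ) * c l * Dh (n - l) (x - 1)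
      - (1 / n) * ∑ j, ∑ l ∈ Finset.range (n + 1),
          (n.choose l : ℚ) * a j * c l * E j (n - l) (x - 1) := by
  have hP : ∏ j, (onePow (a j) - 1) ≠ 0 :=
    prod_ne_zero_iff.mpr fun j _ => onePow_sub_one_ne_zero (ha j)
  have hL := log1p_mul_derivative_barnes hP (F := fun x => egf fun n => Dh n x)
    (by simpa using hDh) (E := fun j x => egf fun n => E j n x) (by simpa using hE) x
  rw [Fintype.card_fin] at hL
  refine eq_of_X_mul_derivative_egf (f := fun n => Dh n x) (g := fun n => Dh n (x - 1))
    (e := fun j n => E j n (x - 1)) ?_ (Nat.one_le_iff_ne_zero.mp hn)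
  linear_combination egf c * hL - (d⁄dX ℚ (egf fun n => Dh n x)
    - C (x + ∑ i, a i) * egf fun n => Dh n (x - 1)) * hc
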